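/- arXiv:0704.1624 — 3 statements merged into one kernel-verified Lean document; each statement's English description precedes it below -/
import Mathlib

section
/- Let G be a small groupoid and n a natural number. The evaluation-at-0 functor ComposableArrows G n → G, sending a chain x₀ → x₁ → ⋯ → xₙ of n composable morphisms to its first object x₀ (and a natural transformation to its component at 0), is an equivalence of categories. -/
/-!
If `i` is initial in `J` and `G` is a groupoid, every `F.map (i ⟶ j)` is invertible, so
`F : J ⥤ G` is isomorphic, naturally in `F`, to the constant functor at `F.obj i`. For chains,
`i = 0`.
-/

open CategoryTheory Limits

namespace CategoryTheory.Groupoid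

universe v v' u w

variable {J : Type u} [Category.{v} J] {G : Type w} [Groupoid.{v'} G] {i : J} (hi : IsInitial i)

@[simps!]
noncomputable def isoConstObjOfIsInitial (F : J ⥤ G) : F ≅ (Functor.const J).obj (F.obj i) :=
  NatIso.ofComponents (fun j => (asIso (F.map (hi.to j))).symm) fun f => by
    simp [← F.map_comp, hi.to_comp]

noncomputable def evaluationEquivOfIsInitial : (J ⥤ G) ≌ G where
  functor := (evaluation J G).obj i
  inverse := Functor.const J
  unitIso := NatIso.ofComponents (isoConstObjOfIsInitial hi) fun η => by
    ext j
    simp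
  counitIso := Iso.refl _

end CategoryTheory.Groupoid

/-- For a small groupoid `G` and `n : ℕ`, the evaluation-at-`0` functor
`ComposableArrows G n ⥤ G`, sending a chain `x₀ → x₁ → ⋯ → xₙ` of `n` composable morphisms
to its first object `x₀` (and a natural transformation to its component at `0`),
is an equivalence of categories. -/
theorem stmt0 (G : Type) [Groupoid.{0} G] (n : ℕ) :
    ((evaluation (Fin (n + 1)) G).obj 0 : ComposableArrows G n ⥤ G).IsEquivalence :=
  (Groupoid.evaluationEquivOfIsInitial (Fin.isInitialZero (n + 1))).isEquivalence_functor
end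

section
/- Let C be a small category, n ≥ 1, and let x₀, …, xₙ be objects of C. Let p : Core(ComposableArrows C n) → ∏_{i : Fin (n+1)} Core C be the functor sending a chain to its tuple of objects. The fiber of nerve(p) over the vertex (x₀, …, xₙ) — that is, the pullback of nerve(p) along the map Δ[0] → nerve(∏_{i : Fin (n+1)} Core C) classifying the 0-simplex (x₀, …, xₙ) — is isomorphic to the constant (discrete) simplicial set on the set Hom(x₀,x₁) × Hom(x₁,x₂) × ⋯ × Hom(x_{n-1},xₙ). -/
open CategoryTheory Simplicial

/-- The functor `Core C ⥤ Core D` induced by a functor `C ⥤ D`. -/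
def coreMap {C : Type*} [Category C] {D : Type*} [Category D] (F : C ⥤ D) :
    Core C ⥤ Core D :=
  Core.functorToCore (Core.inclusion _ ⋙ F)

/-- The map of nerves induced by a functor. -/
def nerveMap {C : Type} [Category.{0} C] {D : Type} [Category.{0} D] (F : C ⥤ D) :
    nerve C ⟶ nerve D :=
  nerveFunctor.map (X := Cat.of C) (Y := Cat.of D) F.toCatHom

/-- The functor `Core (ComposableArrows C n) ⥤ ∏_{i : Fin (n+1)} Core C` sending a chain
`x₀ → x₁ → ⋯ → xₙ` to its tuple of objects `(x₀, x₁, …, xₙ)`. -/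
def chainToObjects (C : Type) [SmallCategory C] (n : ℕ) :
    Core (ComposableArrows C n) ⥤ (Fin (n + 1) → Core C) :=
  Functor.pi' (fun i => coreMap ((evaluation (Fin (n + 1)) C).obj i))

/-- The map `Δ[0] ⟶ X` classifying a `0`-simplex `x` of a simplicial set `X`. -/
def classifyingMap (X : SSet.{0}) (x : X _⦋0⦌) : Δ[0] ⟶ X :=
  (SSet.yonedaEquiv (X := X) (n := _)).symm x

/-! A simplex of `nerve p` over the constant simplex at `x` is a string of isomorphisms of chains
whose components are all identities. Such an isomorphism is the identity of a single chain, so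
the simplex is constant: the fiber is discrete, on the set of chains with objects `x`, i.e. on the
tuples of maps `x i ⟶ x (i + 1)`. The first step only uses that `p` is faithful and that only
identities lie over identities. -/

open Limits

namespace CategoryTheory.Functor

variable {D E : Type*} [Category D] [Category E] (p : D ⥤ E)
  (hp : ∀ ⦃a b : D⦄ (f : a ⟶ b) (h : p.obj a = p.obj b), p.map f = eqToHom h → a = b)
include hp

lemma obj_eq_of_comp_eq_const {J : Type*} [Category J] {σ : J ⥤ D} {e : E}
    (hσ : σ ⋙ p = (const J).obj e) {j j' : J} (f : j ⟶ j') : σ.obj j = σ.obj j' :=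
  hp (σ.map f) _ (by simpa using Functor.congr_hom hσ f)

variable [p.Faithful]

lemma map_eq_eqToHom_of_comp_eq_const {J : Type*} [Category J] {σ : J ⥤ D} {e : E}
    (hσ : σ ⋙ p = (const J).obj e) {j j' : J} (f : j ⟶ j') :
    σ.map f = eqToHom (obj_eq_of_comp_eq_const p hp hσ f) :=
  p.map_injective (by simpa [eqToHom_map] using Functor.congr_hom hσ f)

lemma eq_const_of_comp_eq_const {J : Type*} [Preorder J] [OrderBot J] {σ : J ⥤ D} {e : E}
    (hσ : σ ⋙ p = (const J).obj e) : σ = (const J).obj (σ.obj ⊥) :=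
  Functor.ext (fun j => (obj_eq_of_comp_eq_const p hp hσ (homOfLE bot_le)).symm)
    (fun _ _ f => by simp [map_eq_eqToHom_of_comp_eq_const p hp hσ f])

end CategoryTheory.Functor

section NerveFiber

variable {D E : Type} [SmallCategory D] [SmallCategory E] (p : D ⥤ E) (e : E)

noncomputable def nerveFiberCone :
    PullbackCone (_root_.nerveMap p) (classifyingMap (nerve E) (ComposableArrows.mk₀ e)) :=
  PullbackCone.mk (W := (Functor.const SimplexCategoryᵒᵖ).obj {d : D // p.obj d = e})
    { app m := ↾fun d => (Functor.const (Fin (m.unop.len + 1))).obj d.1 }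
    (SSet.stdSimplex.isTerminalObj₀.from _)
    (by
      ext m d : 4
      change (Functor.const _).obj d.1 ⋙ p = (Functor.const _).obj e
      exact CategoryTheory.Functor.ext (fun _ => d.2) (by simp))

variable {p e} in
lemma pullbackCone_fst_app_comp_eq_const
    (s : PullbackCone (_root_.nerveMap p) (classifyingMap (nerve E) (ComposableArrows.mk₀ e)))
    (m : SimplexCategoryᵒᵖ) (y : s.pt.obj m) :
    (s.fst.app m y : ComposableArrows D m.unop.len) ⋙ p = (Functor.const _).obj e :=
  types_congr_hom (NatTrans.congr_app s.condition m) y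

variable (hp : ∀ ⦃a b : D⦄ (f : a ⟶ b) (h : p.obj a = p.obj b), p.map f = eqToHom h → a = b)
include hp

noncomputable def nerveFiberLift
    (s : PullbackCone (_root_.nerveMap p) (classifyingMap (nerve E) (ComposableArrows.mk₀ e))) :
    s.pt ⟶ (nerveFiberCone p e).pt where
  app m := ↾fun y =>
    ⟨(s.fst.app m y).obj 0, Functor.congr_obj (pullbackCone_fst_app_comp_eq_const s m y) 0⟩
  naturality m m' α := by
    ext y
    apply Subtype.ext
    change (s.fst.app m' (s.pt.map α y)).obj 0 = (s.fst.app m y).obj 0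
    rw [NatTrans.naturality_apply]
    exact (p.obj_eq_of_comp_eq_const hp (pullbackCone_fst_app_comp_eq_const s m y)
      (homOfLE (Fin.zero_le _))).symm

noncomputable def isLimitNerveFiberCone [p.Faithful] : IsLimit (nerveFiberCone p e) :=
  PullbackCone.IsLimit.mk _ (nerveFiberLift p e hp)
    (fun s => by
      ext m y : 4
      exact (p.eq_const_of_comp_eq_const hp (pullbackCone_fst_app_comp_eq_const s m y)).symm)
    (fun _ => SSet.stdSimplex.ext₀)
    (fun s ℓ hℓ _ => by
      ext m y : 4
      exact Subtype.ext (Functor.congr_obj (types_congr_hom (NatTrans.congr_app hℓ m) y) 0))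

end NerveFiber

namespace CategoryTheory.ComposableArrows

variable {C : Type*} [Category C] {n : ℕ}

noncomputable def objEqEquiv (x : Fin (n + 1) → C) :
    {F : ComposableArrows C n // F.obj = x} ≃ ∀ i : Fin n, (x i.castSucc ⟶ x i.succ) where
  toFun F i := eqToHom (congr_fun F.2 _).symm ≫ F.1.map (homOfLE i.castSucc_le_succ) ≫
    eqToHom (congr_fun F.2 _)
  invFun g := ⟨mkOfObjOfMapSucc x g, rfl⟩
  left_inv := by
    rintro ⟨F, rfl⟩
    refine Subtype.ext (ext (fun _ => rfl) (fun i hi => ?_))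
    rw [mkOfObjOfMapSucc_map_succ _ _ i hi]
    simp only [eqToHom_refl, Category.id_comp, Category.comp_id]
    exact ((Category.id_comp _).trans (Category.comp_id _)).symm
  right_inv g := by
    funext i
    exact (Category.id_comp _).trans
      ((Category.comp_id _).trans (mkOfObjOfMapSucc_map_succ x g i i.2))

end CategoryTheory.ComposableArrows

section ChainToObjects

variable (C : Type) [SmallCategory C] (n : ℕ)

instance : (chainToObjects C n).Faithful where
  map_injective h := Core.hom_ext (NatTrans.ext (funext fun i =>
    congrArg (fun φ => (φ i).iso.hom) h))

lemma chainToObjects_obj_eq_of_map_eq_eqToHom ⦃a b : Core (ComposableArrows C n)⦄ (f : a ⟶ b)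
    (h : (chainToObjects C n).obj a = (chainToObjects C n).obj b)
    (hf : (chainToObjects C n).map f = eqToHom h) : a = b := by
  have hobj (i : Fin (n + 1)) : a.of.obj i = b.of.obj i := congrArg Core.of (congr_fun h i)
  have happ (i : Fin (n + 1)) : f.iso.hom.app i = eqToHom (hobj i) := by
    have := congrArg (fun φ => (Core.inclusion C).map (φ i)) hf
    rw [Functor.eqToHom_proj, eqToHom_map] at this
    exact this
  exact congrArg Core.mk (Functor.ext_of_iso f.iso hobj happ)

variable {C n}

def chainToObjectsFiberEquiv (x : Fin (n + 1) → C) :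
    {F : Core (ComposableArrows C n) // (chainToObjects C n).obj F = fun i => Core.mk (x i)} ≃
      {F : ComposableArrows C n // F.obj = x} where
  toFun F := ⟨F.1.of, funext fun i => congrArg Core.of (congr_fun F.2 i)⟩
  invFun F := ⟨⟨F.1⟩, congrArg (fun y i => Core.mk (y i)) F.2⟩

end ChainToObjects

theorem stmt7_general (C : Type) [SmallCategory C] (n : ℕ) (x : Fin (n + 1) → C) :
    Nonempty
      (Limits.pullback (_root_.nerveMap (chainToObjects C n))
          (classifyingMap (nerve (Fin (n + 1) → Core C))
            (ComposableArrows.mk₀ (fun i => (Core.mk (x i) : Core C)))) ≅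
        (Functor.const SimplexCategoryᵒᵖ).obj (∀ i : Fin n, (x i.castSucc ⟶ x i.succ))) :=
  ⟨(pullbackIsPullback _ _).conePointUniqueUpToIso
      (isLimitNerveFiberCone _ _ (chainToObjects_obj_eq_of_map_eq_eqToHom C n)) ≪≫
    (Functor.const _).mapIso
      ((chainToObjectsFiberEquiv x).trans (ComposableArrows.objEqEquiv x)).toIso⟩

/-- Let `C` be a small category, `n ≥ 1`, and `x₀, …, xₙ` objects of `C`.
Let `p : Core (ComposableArrows C n) ⥤ ∏_{i : Fin (n+1)} Core C` send a chain to its tuple of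
objects.  The fiber of `nerve p` over the vertex `(x₀, …, xₙ)` — the pullback of `nerve p`
along the map `Δ[0] ⟶ nerve (∏_{i} Core C)` classifying the `0`-simplex `(x₀, …, xₙ)` — is
isomorphic to the constant (discrete) simplicial set on the set
`Hom(x₀,x₁) × Hom(x₁,x₂) × ⋯ × Hom(x_{n-1},xₙ)`. -/
theorem stmt7 (C : Type) [SmallCategory C] (n : ℕ) (hn : 1 ≤ n) (x : Fin (n + 1) → C) :
    Nonempty
      (Limits.pullback (_root_.nerveMap (chainToObjects C n))
          (classifyingMap (nerve (Fin (n + 1) → Core C))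
            (ComposableArrows.mk₀ (fun i => (Core.mk (x i) : Core C)))) ≅
        (Functor.const SimplexCategoryᵒᵖ).obj (∀ i : Fin n, (x i.castSucc ⟶ x i.succ))) :=
  stmt7_general C n x
end

section
/- Let C be a small category, n ≥ 1, and let x₀, …, xₙ be objects of C. The full subcategory of Core(ComposableArrows C n) on those chains y₀ → y₁ → ⋯ → yₙ with y_i isomorphic to x_i in C for every i is equivalent, as a category, to the action groupoid of the group Aut(x₀) × Aut(x₁) × ⋯ × Aut(xₙ) acting on the set Hom(x₀,x₁) × Hom(x₁,x₂) × ⋯ × Hom(x_{n-1},xₙ) by ((α₀,…,αₙ) · (f₀,…,f_{n-1}))_j = α_{j+1} ∘ f_j ∘ α_j⁻¹. -/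
open CategoryTheory

/-- The action of the group `Aut(x₀) × Aut(x₁) × ⋯ × Aut(xₙ)` on the set
`Hom(x₀,x₁) × Hom(x₁,x₂) × ⋯ × Hom(x_{n-1},xₙ)` by
`((α₀,…,αₙ) • (f₀,…,f_{n-1}))_j = α_{j+1} ∘ f_j ∘ α_j⁻¹`. -/
instance chainConjAction (C : Type) [SmallCategory C] (n : ℕ) (x : Fin (n + 1) → C) :
    MulAction (∀ i : Fin (n + 1), Aut (x i))
      (∀ j : Fin n, (x j.castSucc ⟶ x j.succ)) where
  smul α f := fun j => (α j.castSucc).inv ≫ f j ≫ (α j.succ).hom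
  one_smul f := by
    funext j
    show (Iso.refl _).inv ≫ f j ≫ (Iso.refl _).hom = f j
    simp
  mul_smul α β f := by
    funext j
    show ((α * β) _).inv ≫ f j ≫ ((α * β) _).hom =
      (α _).inv ≫ ((β _).inv ≫ f j ≫ (β _).hom) ≫ (α _).hom
    simp [Pi.mul_apply, Aut.Aut_mul_def]
    change ((α _).inv ≫ (β _).inv) ≫ f j ≫ ((β _).hom ≫ (α _).hom) = _
    simp only [Category.assoc]

/-!
A chain `y₀ → ⋯ → yₙ` together with isomorphisms `yᵢ ≅ xᵢ` can be transported to a chain whose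
objects are literally the `xᵢ`, i.e. to a point of `∏ Hom(x_j, x_{j+1})`. An isomorphism between
two such chains `f` and `g` is a family of automorphisms `αᵢ` of the `xᵢ`, and its naturality
squares say exactly that `α • f = g`. Hence sending `f` to its chain is a fully faithful,
essentially surjective functor out of the action groupoid.
-/

namespace CategoryTheory.ComposableArrows

variable {C : Type*} [Category C] {n : ℕ}

def isoMk' {F G : ComposableArrows C n} (app : ∀ i, F.obj i ≅ G.obj i)
    (w : ∀ j : Fin n, F.map (homOfLE j.castSucc_le_succ) ≫ (app j.succ).hom =
      (app j.castSucc).hom ≫ G.map (homOfLE j.castSucc_le_succ)) :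
    F ≅ G :=
  isoMk app fun i hi => w ⟨i, hi⟩

@[simp]
lemma mkOfObjOfMapSucc_map_castSucc_succ (obj : Fin (n + 1) → C)
    (mapSucc : ∀ j : Fin n, obj j.castSucc ⟶ obj j.succ) (j : Fin n) :
    (mkOfObjOfMapSucc obj mapSucc).map (homOfLE j.castSucc_le_succ) = mapSucc j :=
  mkOfObjOfMapSucc_map_succ obj mapSucc j j.isLt

noncomputable def isoMkOfObjOfMapSucc (F : ComposableArrows C n) {obj : Fin (n + 1) → C}
    (e : ∀ i, F.obj i ≅ obj i) :
    mkOfObjOfMapSucc obj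
      (fun j => (e j.castSucc).inv ≫ F.map (homOfLE j.castSucc_le_succ) ≫ (e j.succ).hom) ≅ F :=
  isoMk' (fun i => (e i).symm) fun j => by simp

end CategoryTheory.ComposableArrows

namespace ChainConjAction

open ComposableArrows

variable {C : Type} [SmallCategory C] {n : ℕ} {x : Fin (n + 1) → C}

lemma smul_apply (α : ∀ i, Aut (x i)) (f : ∀ j : Fin n, x j.castSucc ⟶ x j.succ) (j : Fin n) :
    (α • f) j = (α j.castSucc).inv ≫ f j ≫ (α j.succ).hom :=
  rfl

lemma smul_eq_iff (α : ∀ i, Aut (x i)) (f g : ∀ j : Fin n, x j.castSucc ⟶ x j.succ) :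
    α • f = g ↔ ∀ j, f j ≫ (α j.succ).hom = (α j.castSucc).hom ≫ g j := by
  refine funext_iff.trans (forall_congr' fun j => ?_)
  rw [smul_apply, Iso.inv_comp_eq (α j.castSucc), eq_comm]

variable (x)

abbrev objIsoTo : ObjectProperty (Core (ComposableArrows C n)) := fun F =>
  ∀ i, Nonempty (((Core.inclusion (ComposableArrows C n)).obj F).obj i ≅ x i)

noncomputable def chainFunctor :
    ActionCategory (∀ i, Aut (x i)) (∀ j : Fin n, x j.castSucc ⟶ x j.succ) ⥤
      (objIsoTo x).FullSubcategory where
  obj f := ⟨⟨mkOfObjOfMapSucc x f.back⟩, fun _ => ⟨Iso.refl _⟩⟩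
  map α := ObjectProperty.homMk ⟨isoMk' (fun i => α.val i) fun j => by
    rw [mkOfObjOfMapSucc_map_castSucc_succ, mkOfObjOfMapSucc_map_castSucc_succ]
    exact (smul_eq_iff _ _ _).1 α.2 j⟩

noncomputable def fullyFaithfulChainFunctor : (chainFunctor x).FullyFaithful where
  preimage {f g} e := ⟨fun i => e.hom.iso.app i, (smul_eq_iff _ _ _).2 fun j => by
    have h := e.hom.iso.hom.naturality (homOfLE j.castSucc_le_succ)
    dsimp only [chainFunctor] at h
    rwa [mkOfObjOfMapSucc_map_castSucc_succ, mkOfObjOfMapSucc_map_castSucc_succ] at h⟩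

instance : (chainFunctor x).EssSurj where
  mem_essImage F := by
    have e i : F.obj.of.obj i ≅ x i := (F.property i).some
    exact ⟨ActionCategory.objEquiv _ _
      fun j => (e j.castSucc).inv ≫ F.obj.of.map (homOfLE j.castSucc_le_succ) ≫ (e j.succ).hom,
      ⟨(objIsoTo x).isoMk (Core.isoMk (isoMkOfObjOfMapSucc F.obj.of e))⟩⟩

instance : (chainFunctor x).IsEquivalence where
  faithful := (fullyFaithfulChainFunctor x).faithful
  full := (fullyFaithfulChainFunctor x).full

end ChainConjAction

theorem stmt9_general (C : Type) [SmallCategory C] (n : ℕ) (x : Fin (n + 1) → C) :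
    Nonempty
      ((ObjectProperty.FullSubcategory (fun F : Core (ComposableArrows C n) =>
          ∀ i : Fin (n + 1),
            Nonempty (((Core.inclusion (ComposableArrows C n)).obj F).obj i ≅ x i))) ≌
        ActionCategory (∀ i : Fin (n + 1), Aut (x i))
          (∀ j : Fin n, (x j.castSucc ⟶ x j.succ))) :=
  ⟨(ChainConjAction.chainFunctor x).asEquivalence.symm⟩

/-- Let `C` be a small category, `n ≥ 1`, and `x₀, …, xₙ` objects of `C`.
The full subcategory of `Core (ComposableArrows C n)` on the chains `y₀ → ⋯ → yₙ` with
`yᵢ ≅ xᵢ` in `C` for every `i` is equivalent to the action groupoid of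
`Aut(x₀) × ⋯ × Aut(xₙ)` acting on `Hom(x₀,x₁) × ⋯ × Hom(x_{n-1},xₙ)` by
`((α₀,…,αₙ) • (f₀,…,f_{n-1}))_j = α_{j+1} ∘ f_j ∘ α_j⁻¹`. -/
theorem stmt9 (C : Type) [SmallCategory C] (n : ℕ) (hn : 1 ≤ n) (x : Fin (n + 1) → C) :
    Nonempty
      ((ObjectProperty.FullSubcategory (fun F : Core (ComposableArrows C n) =>
          ∀ i : Fin (n + 1),
            Nonempty (((Core.inclusion (ComposableArrows C n)).obj F).obj i ≅ x i))) ≌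
        ActionCategory (∀ i : Fin (n + 1), Aut (x i))
          (∀ j : Fin n, (x j.castSucc ⟶ x j.succ))) :=
  stmt9_general C n x
end
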